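/- Let X be a Banach space and Y ⊆ X a closed subspace such that Y is a Grothendieck space and X/Y has property (K). Then X has property (K). -/

import Mathlib

open NormedSpace Filter

/-- A set is weakly compact if it is compact in the weak topology. -/
def IsWeaklyCompact {X : Type*} [NormedAddCommGroup X] [NormedSpace ℝ X] (L : Set X) : Prop :=
  IsCompact (toWeakSpace ℝ X '' L)

/-- Weak* convergence of a sequence of functionals. -/
def WStarTendsto {X : Type*} [NormedAddCommGroup X] [NormedSpace ℝ X]
    (f : ℕ → StrongDual ℝ X) (g : StrongDual ℝ X) : Prop :=
  ∀ x : X, Tendsto (fun n => f n x) atTop (nhds (g x))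

/-- Convergence in the Mackey topology μ(X*,X): uniform convergence on every
weakly compact subset of X. -/
def MackeyTendsto {X : Type*} [NormedAddCommGroup X] [NormedSpace ℝ X]
    (f : ℕ → StrongDual ℝ X) (g : StrongDual ℝ X) : Prop :=
  ∀ L : Set X, IsWeaklyCompact L → ∀ ε : ℝ, 0 < ε →
    ∀ᶠ n in atTop, ∀ x ∈ L, |f n x - g x| < ε

/-- `y` is a convex block subsequence of `x`. -/
def IsConvexBlock {E : Type*} [AddCommGroup E] [Module ℝ E] (x y : ℕ → E) : Prop :=
  ∃ (I : ℕ → Finset ℕ) (a : ℕ → ℝ),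
    (∀ k, (I k).Nonempty) ∧
    (∀ k m m', m ∈ I k → m' ∈ I (k + 1) → m < m') ∧
    (∀ n, 0 ≤ a n) ∧
    (∀ k, ∑ n ∈ I k, a n = 1) ∧
    (∀ k, y k = ∑ n ∈ I k, a n • x n)

/-- Property (K): every weak*-convergent sequence in the dual admits a convex block
subsequence converging in the Mackey topology. -/
def PropertyK (X : Type*) [NormedAddCommGroup X] [NormedSpace ℝ X] : Prop :=
  ∀ (f : ℕ → StrongDual ℝ X) (g : StrongDual ℝ X), WStarTendsto f g →
    ∃ (y : ℕ → StrongDual ℝ X) (h : StrongDual ℝ X), IsConvexBlock f y ∧ MackeyTendsto y h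

/-- A Banach space is Grothendieck if every weak*-convergent sequence in the dual
is weakly convergent. -/
def GrothendieckSpace (Y : Type*) [NormedAddCommGroup Y] [NormedSpace ℝ Y] : Prop :=
  ∀ (f : ℕ → StrongDual ℝ Y) (g : StrongDual ℝ Y), WStarTendsto f g →
    ∀ F : StrongDual ℝ (StrongDual ℝ Y), Tendsto (fun n => F (f n)) atTop (nhds (F g))

/-! Restricted to `Y`, a weak*-convergent sequence `fₙ → g` in `X*` is weak*-convergent in `Y*`,
hence weakly convergent because `Y` is Grothendieck; by Mazur's lemma some convex block sequence
`f₁` of `f` has restrictions to `Y` converging in norm. Extending `(f₁ₖ - g)|_Y` by Hahn–Banach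
writes `f₁ₖ = g + Gₖ + Eₖ ∘ q`, where `q : X → X/Y` is the quotient map, `Gₖ → 0` in norm and
`Eₖ` is weak*-null in `(X/Y)*`. Property (K) of `X/Y` gives a convex block sequence of `Eₖ`
converging in `μ((X/Y)*, X/Y)`; the same weights applied to `f₁` give a convex block sequence of
`f` converging to `g + H ∘ q` in `μ(X*, X)`, since norm convergence implies Mackey convergence
(weakly compact sets are bounded) and `q` maps weakly compact sets to weakly compact sets. -/

open Set Topology

def IsBlockSeq (I : ℕ → Finset ℕ) : Prop :=
  (∀ k, (I k).Nonempty) ∧ ∀ k m m', m ∈ I k → m' ∈ I (k + 1) → m < m'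

namespace IsBlockSeq

variable {I : ℕ → Finset ℕ}

theorem lt_of_lt (hI : IsBlockSeq I) {k l m m' : ℕ} (hkl : k < l) (hm : m ∈ I k)
    (hm' : m' ∈ I l) : m < m' := by
  induction l generalizing m' with
  | zero => omega
  | succ l ih =>
    rcases Nat.lt_succ_iff_lt_or_eq.1 hkl with h | rfl
    · obtain ⟨p, hp⟩ := hI.1 l
      exact (ih h hp).trans (hI.2 l p m' hp hm')
    · exact hI.2 k m m' hm hm'

theorem le_of_mem (hI : IsBlockSeq I) {k m : ℕ} (hm : m ∈ I k) : k ≤ m := by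
  induction k generalizing m with
  | zero => exact m.zero_le
  | succ k ih =>
    obtain ⟨p, hp⟩ := hI.1 k
    exact (ih hp).trans_lt (hI.2 k p m hp hm)

theorem pairwise_disjoint (hI : IsBlockSeq I) : Pairwise (Function.onFun Disjoint I) := by
  intro k l hkl
  refine Finset.disjoint_left.2 fun m hmk hml => ?_
  rcases hkl.lt_or_gt with h | h
  · exact (hI.lt_of_lt h hmk hml).false
  · exact (hI.lt_of_lt h hml hmk).false

theorem biUnion (hI : IsBlockSeq I) {J : ℕ → Finset ℕ} (hJ : IsBlockSeq J) :
    IsBlockSeq fun k => (J k).biUnion I := by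
  refine ⟨fun k => (hJ.1 k).biUnion fun j _ => hI.1 j, fun k m m' hm hm' => ?_⟩
  obtain ⟨j, hj, hmj⟩ := Finset.mem_biUnion.1 hm
  obtain ⟨j', hj', hmj'⟩ := Finset.mem_biUnion.1 hm'
  exact hI.lt_of_lt (hJ.2 k j j' hj hj') hmj hmj'

end IsBlockSeq

theorem exists_isBlockSeq (S : ℕ → ℕ → Finset ℕ) (hne : ∀ k N, (S k N).Nonempty)
    (hge : ∀ k N, ∀ n ∈ S k N, N ≤ n) : ∃ N : ℕ → ℕ, IsBlockSeq fun k => S k (N k) := by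
  let N : ℕ → ℕ := fun k => Nat.rec 0 (fun k Nk => (S k Nk).sup id + 1) k
  refine ⟨N, fun k => hne k (N k), fun k m m' hm hm' => ?_⟩
  have hm'N : (S k (N k)).sup id + 1 ≤ m' := hge (k + 1) (N (k + 1)) m' hm'
  have := Finset.le_sup (f := id) hm
  simp only [id] at this
  omega

theorem exists_finset_of_mem_convexHull_image {ι E : Type*} [AddCommGroup E] [Module ℝ E]
    {x : ι → E} {s : Set ι} {v : E} (hv : v ∈ convexHull ℝ (x '' s)) :
    ∃ (I : Finset ι) (c : ι → ℝ), (I : Set ι) ⊆ s ∧ (∀ n ∈ I, 0 ≤ c n) ∧ ∑ n ∈ I, c n = 1 ∧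
      ∑ n ∈ I, c n • x n = v := by
  classical
  rw [convexHull_eq_union_convexHull_finite_subsets] at hv
  obtain ⟨t, ht, hv⟩ := mem_iUnion₂.1 hv
  obtain ⟨w, hw₀, hw₁, rfl⟩ := Finset.mem_convexHull'.1 hv
  obtain ⟨e₀, he₀⟩ := Finset.nonempty_of_sum_ne_zero (hw₁.trans_ne one_ne_zero)
  have : Nonempty ι := ⟨(ht he₀).choose⟩
  choose! pre hpre hxpre using fun e (he : e ∈ t) => ht he
  have hinj : InjOn pre t := fun e he e' he' h => by rw [← hxpre e he, ← hxpre e' he', h]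
  refine ⟨t.image pre, fun n => w (x n), ?_, ?_, ?_, ?_⟩
  · simpa [Set.subset_def] using hpre
  · simpa using fun e he => (hxpre e he).symm ▸ hw₀ e he
  · rw [Finset.sum_image hinj]
    exact (Finset.sum_congr rfl fun e he => by rw [hxpre e he]).trans hw₁
  · rw [Finset.sum_image hinj]
    exact Finset.sum_congr rfl fun e he => by simp only [hxpre e he]

section ConvexBlock

variable {E F : Type*} [AddCommGroup E] [Module ℝ E] [AddCommGroup F] [Module ℝ F]

theorem isConvexBlock_of_isBlockSeq {x y : ℕ → E} {I : ℕ → Finset ℕ} (hI : IsBlockSeq I)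
    (c : ℕ → ℕ → ℝ) (hc₀ : ∀ k, ∀ n ∈ I k, 0 ≤ c k n) (hc₁ : ∀ k, ∑ n ∈ I k, c k n = 1)
    (hy : ∀ k, y k = ∑ n ∈ I k, c k n • x n) : IsConvexBlock x y := by
  classical
  -- the blocks are pairwise disjoint, so `a n` is the weight of the block containing `n`
  let a : ℕ → ℝ := fun n => if h : ∃ k, n ∈ I k then c h.choose n else 0
  have ha : ∀ k, ∀ n ∈ I k, a n = c k n := by
    intro k n hn
    have h : ∃ k, n ∈ I k := ⟨k, hn⟩
    have hk : h.choose = k := by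
      by_contra hne
      exact Finset.disjoint_left.1 (hI.pairwise_disjoint hne) h.choose_spec hn
    simp only [a, dif_pos h, hk]
  refine ⟨I, a, hI.1, hI.2, fun n => ?_, fun k => ?_, fun k => ?_⟩
  · by_cases h : ∃ k, n ∈ I k
    · obtain ⟨k, hk⟩ := h
      exact ha k n hk ▸ hc₀ k n hk
    · simp only [a, dif_neg h, le_refl]
  · rw [Finset.sum_congr rfl (ha k), hc₁]
  · rw [hy]
    exact Finset.sum_congr rfl fun n hn => by rw [ha k n hn]

namespace IsConvexBlock

theorem trans {x y z : ℕ → E} (hxy : IsConvexBlock x y) (hyz : IsConvexBlock y z) :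
    IsConvexBlock x z := by
  classical
  obtain ⟨I, a, hIne, hIord, ha₀, ha₁, hy⟩ := hxy
  obtain ⟨J, b, hJne, hJord, hb₀, hb₁, hz⟩ := hyz
  have hI : IsBlockSeq I := ⟨hIne, hIord⟩
  refine isConvexBlock_of_isBlockSeq (hI.biUnion ⟨hJne, hJord⟩)
    (fun k n => ∑ j ∈ J k, if n ∈ I j then b j * a n else 0) (fun k n _ => ?_) (fun k => ?_)
    (fun k => ?_)
  · exact Finset.sum_nonneg fun j _ => by split_ifs <;> simp [mul_nonneg, hb₀, ha₀]
  · rw [Finset.sum_comm, ← hb₁ k]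
    refine Finset.sum_congr rfl fun j hj => ?_
    rw [Finset.sum_ite_mem, Finset.inter_eq_right.2 (Finset.subset_biUnion_of_mem I hj),
      ← Finset.mul_sum, ha₁, mul_one]
  · simp_rw [hz, Finset.sum_smul, ite_smul, zero_smul]
    rw [Finset.sum_comm]
    refine Finset.sum_congr rfl fun j hj => ?_
    rw [Finset.sum_ite_mem, Finset.inter_eq_right.2 (Finset.subset_biUnion_of_mem I hj), hy,
      Finset.smul_sum]
    simp_rw [smul_smul]

theorem map {x y : ℕ → E} (h : IsConvexBlock x y) (L : E →ₗ[ℝ] F) :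
    IsConvexBlock (fun n => L (x n)) (fun k => L (y k)) := by
  obtain ⟨I, a, hIne, hIord, ha₀, ha₁, hy⟩ := h
  exact ⟨I, a, hIne, hIord, ha₀, ha₁, fun k => by simp [hy, map_sum]⟩

theorem const_add {x y : ℕ → E} (h : IsConvexBlock x y) (c : E) :
    IsConvexBlock (fun n => c + x n) (fun k => c + y k) := by
  obtain ⟨I, a, hIne, hIord, ha₀, ha₁, hy⟩ := h
  refine ⟨I, a, hIne, hIord, ha₀, ha₁, fun k => ?_⟩
  simp only [hy, smul_add, Finset.sum_add_distrib, ← Finset.sum_smul, ha₁, one_smul]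

theorem exists_of_map {x : ℕ → E} {y' : ℕ → F} (L : E →ₗ[ℝ] F)
    (h : IsConvexBlock (fun n => L (x n)) y') : ∃ y, IsConvexBlock x y ∧ ∀ k, L (y k) = y' k := by
  obtain ⟨I, a, hIne, hIord, ha₀, ha₁, hy'⟩ := h
  exact ⟨fun k => ∑ n ∈ I k, a n • x n, ⟨I, a, hIne, hIord, ha₀, ha₁, fun _ => rfl⟩,
    fun k => by simp [hy', map_sum]⟩

theorem mem_convexHull {x y : ℕ → E} (h : IsConvexBlock x y) (k : ℕ) :
    y k ∈ convexHull ℝ (x '' Ici k) := by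
  obtain ⟨I, a, hIne, hIord, ha₀, ha₁, hy⟩ := h
  rw [hy]
  exact (convex_convexHull ℝ _).sum_mem (fun n _ => ha₀ n) (ha₁ k) fun n hn =>
    subset_convexHull ℝ _ ⟨n, IsBlockSeq.le_of_mem ⟨hIne, hIord⟩ hn, rfl⟩

theorem tendsto [TopologicalSpace E] [LocallyConvexSpace ℝ E] {x y : ℕ → E} {l : E}
    (h : IsConvexBlock x y) (hx : Tendsto x atTop (𝓝 l)) : Tendsto y atTop (𝓝 l) := by
  refine ((LocallyConvexSpace.convex_basis (𝕜 := ℝ) l).tendsto_right_iff).2 fun U ⟨hU, hUc⟩ => ?_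
  obtain ⟨N, hN⟩ := eventually_atTop.1 (hx hU)
  filter_upwards [eventually_ge_atTop N] with k hk
  exact convexHull_min (image_subset_iff.2 fun n hn => hN n (hk.trans hn)) hUc (h.mem_convexHull k)

end IsConvexBlock

theorem exists_isConvexBlock_forall (x : ℕ → E) (P : ℕ → E → Prop)
    (h : ∀ k N, ∃ v ∈ convexHull ℝ (x '' Ici N), P k v) :
    ∃ y, IsConvexBlock x y ∧ ∀ k, P k (y k) := by
  have h' : ∀ k N, ∃ (I : Finset ℕ) (c : ℕ → ℝ), (I : Set ℕ) ⊆ Ici N ∧ (∀ n ∈ I, 0 ≤ c n) ∧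
      ∑ n ∈ I, c n = 1 ∧ P k (∑ n ∈ I, c n • x n) := fun k N => by
    obtain ⟨v, hv, hPv⟩ := h k N
    obtain ⟨I, c, hIN, hc₀, hc₁, rfl⟩ := exists_finset_of_mem_convexHull_image hv
    exact ⟨I, c, hIN, hc₀, hc₁, hPv⟩
  choose S c hSN hc₀ hc₁ hP using h'
  obtain ⟨N, hN⟩ := exists_isBlockSeq S
    (fun k N => Finset.nonempty_of_sum_ne_zero ((hc₁ k N).trans_ne one_ne_zero))
    (fun k N n hn => hSN k N hn)
  exact ⟨_, isConvexBlock_of_isBlockSeq hN (fun k => c k (N k)) (fun k => hc₀ k (N k))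
    (fun k => hc₁ k (N k)) fun _ => rfl, fun k => hP k (N k)⟩

end ConvexBlock

/-- Mazur's lemma. -/
theorem mem_closure_convexHull_of_forall_tendsto {E : Type*} [AddCommGroup E] [Module ℝ E]
    [TopologicalSpace E] [IsTopologicalAddGroup E] [ContinuousSMul ℝ E] [LocallyConvexSpace ℝ E]
    {x : ℕ → E} {l : E}
    (hx : ∀ φ : StrongDual ℝ E, Tendsto (fun n => φ (x n)) atTop (𝓝 (φ l))) (N : ℕ) :
    l ∈ closure (convexHull ℝ (x '' Ici N)) := by
  by_contra hl
  obtain ⟨φ, c, hφl, hφ⟩ :=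
    geometric_hahn_banach_point_closed (convex_convexHull ℝ _).closure isClosed_closure hl
  obtain ⟨n, hn, hNn⟩ := ((hx φ).eventually_lt_const hφl |>.and (eventually_ge_atTop N)).exists
  exact hn.not_gt (hφ _ (subset_closure (subset_convexHull ℝ _ ⟨n, hNn, rfl⟩)))

section Dual

variable {X Z : Type*} [NormedAddCommGroup X] [NormedSpace ℝ X]
  [NormedAddCommGroup Z] [NormedSpace ℝ Z]

theorem IsWeaklyCompact.isBounded {L : Set X} (hL : IsWeaklyCompact L) :
    Bornology.IsBounded L := by
  have hweak : ∀ φ : StrongDual ℝ X, ∃ C, ∀ x : L, ‖inclusionInDoubleDual ℝ X x φ‖ ≤ C := by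
    intro φ
    obtain ⟨C, hC⟩ := (IsCompact.image hL (WeakBilin.eval_continuous _ φ)).isBounded.exists_norm_le
    exact ⟨C, fun x => hC _ ⟨_, ⟨x, x.2, rfl⟩, rfl⟩⟩
  obtain ⟨C, hC⟩ := banach_steinhaus hweak
  refine isBounded_iff_forall_norm_le.2 ⟨C, fun x hx => ?_⟩
  exact (inclusionInDoubleDualLi ℝ).norm_map x ▸ hC ⟨x, hx⟩

theorem IsWeaklyCompact.image {L : Set X} (hL : IsWeaklyCompact L) (T : X →L[ℝ] Z) :
    IsWeaklyCompact (T '' L) := by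
  have := IsCompact.image hL (WeakSpace.map T).continuous
  rw [Set.image_image] at this
  rwa [IsWeaklyCompact, Set.image_image]

theorem MackeyTendsto.add {f f' : ℕ → StrongDual ℝ X} {g g' : StrongDual ℝ X}
    (h : MackeyTendsto f g) (h' : MackeyTendsto f' g') :
    MackeyTendsto (fun n => f n + f' n) (g + g') := by
  intro L hL ε hε
  filter_upwards [h L hL (ε / 2) (by positivity), h' L hL (ε / 2) (by positivity)]
    with n hn hn' x hx
  calc |(f n + f' n) x - (g + g') x| = |(f n x - g x) + (f' n x - g' x)| := by
        congr 1
        show f n x + f' n x - (g x + g' x) = _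
        ring
    _ ≤ |f n x - g x| + |f' n x - g' x| := abs_add_le _ _
    _ < ε := by linarith [hn x hx, hn' x hx]

theorem MackeyTendsto.comp {f : ℕ → StrongDual ℝ Z} {g : StrongDual ℝ Z}
    (h : MackeyTendsto f g) (T : X →L[ℝ] Z) :
    MackeyTendsto (fun n => (f n).comp T) (g.comp T) := fun _ hL ε hε =>
  (h _ (hL.image T) ε hε).mono fun _ hn x hx => hn (T x) (mem_image_of_mem T hx)

theorem Filter.Tendsto.mackeyTendsto {f : ℕ → StrongDual ℝ X} {g : StrongDual ℝ X}
    (h : Tendsto f atTop (𝓝 g)) : MackeyTendsto f g := by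
  intro L hL ε hε
  obtain ⟨M, hM⟩ := hL.isBounded.exists_pos_norm_le
  filter_upwards [(tendsto_iff_norm_sub_tendsto_zero.1 h).eventually_lt_const
    (div_pos hε hM.1)] with n hn x hx
  calc |f n x - g x| = |(f n - g) x| := rfl
    _ ≤ ‖f n - g‖ * ‖x‖ := (f n - g).le_opNorm x
    _ ≤ ‖f n - g‖ * M := by gcongr; exact hM.2 x hx
    _ < ε := (lt_div_iff₀ hM.1).1 hn

theorem IsConvexBlock.wStarTendsto {f y : ℕ → StrongDual ℝ X} {g : StrongDual ℝ X}
    (h : IsConvexBlock f y) (hf : WStarTendsto f g) : WStarTendsto y g := fun x =>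
  (h.map (ContinuousLinearMap.apply ℝ ℝ x).toLinearMap).tendsto (hf x)

theorem exists_isConvexBlock_tendsto_comp_subtypeL (Y : Submodule ℝ X) (hY : GrothendieckSpace Y)
    {f : ℕ → StrongDual ℝ X} {g : StrongDual ℝ X} (hfg : WStarTendsto f g) :
    ∃ f₁, IsConvexBlock f f₁ ∧ Tendsto (fun k => ‖(f₁ k - g).comp Y.subtypeL‖) atTop (𝓝 0) := by
  let R := ContinuousLinearMap.lcomp ℝ Y.subtypeL
  have hweak := hY (fun n => R (f n)) (R g) fun y => hfg y
  obtain ⟨f₁, hff₁, hf₁⟩ := exists_isConvexBlock_forall f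
    (fun k v => ‖R (v - g)‖ < 1 / (k + 1)) fun k N => by
      have hmem := mem_closure_convexHull_of_forall_tendsto hweak N
      rw [← image_image R f, ← R.image_convexHull, Metric.mem_closure_iff] at hmem
      obtain ⟨_, ⟨v, hv, rfl⟩, hdist⟩ := hmem (1 / (k + 1)) (by positivity)
      exact ⟨v, hv, by rwa [dist_comm, dist_eq_norm, ← map_sub] at hdist⟩
  exact ⟨f₁, hff₁, squeeze_zero (fun _ => by positivity) (fun k => (hf₁ k).le)
    tendsto_one_div_add_atTop_nhds_zero_nat⟩

theorem StrongDual.exists_eq_add_comp_mkQL (Y : Submodule ℝ X) (ψ : StrongDual ℝ X) :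
    ∃ (G : StrongDual ℝ X) (E : StrongDual ℝ (X ⧸ Y)),
      ‖G‖ = ‖ψ.comp Y.subtypeL‖ ∧ ψ = G + E.comp Y.mkQL := by
  obtain ⟨G, hGY, hG⟩ := exists_extension_norm_eq Y (ψ.comp Y.subtypeL)
  have hker : Y ≤ (ψ - G).ker := fun y hy => by simp [hGY ⟨y, hy⟩]
  exact ⟨G, Y.liftQL (ψ - G) hker, hG, by ext x; simp⟩

theorem exists_eq_add_comp_mkQL_of_wStarTendsto (Y : Submodule ℝ X) [IsClosed (Y : Set X)]
    {f : ℕ → StrongDual ℝ X} {g : StrongDual ℝ X} (hfg : WStarTendsto f g)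
    (hfY : Tendsto (fun k => ‖(f k - g).comp Y.subtypeL‖) atTop (𝓝 0)) :
    ∃ (G : ℕ → StrongDual ℝ X) (E : ℕ → StrongDual ℝ (X ⧸ Y)), Tendsto G atTop (𝓝 0) ∧
      WStarTendsto E 0 ∧ ∀ k, f k = g + (G k + (E k).comp Y.mkQL) := by
  choose G E hG hf using fun k => StrongDual.exists_eq_add_comp_mkQL Y (f k - g)
  have hG₀ : Tendsto G atTop (𝓝 0) :=
    tendsto_zero_iff_norm_tendsto_zero.2 (by simpa only [hG] using hfY)
  refine ⟨G, E, hG₀, fun z => ?_, fun k => by rw [← hf k, add_sub_cancel]⟩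
  obtain ⟨x, rfl⟩ := Y.mkQ_surjective z
  have hEx : ∀ k, E k (Y.mkQ x) = f k x - g x - G k x := fun k =>
    congrArg (fun φ => φ x) (sub_eq_of_eq_add' (hf k)).symm
  have hGx := ((ContinuousLinearMap.apply ℝ ℝ x).continuous.tendsto 0).comp hG₀
  refine Tendsto.congr (fun k => (hEx k).symm) ?_
  simpa using ((hfg x).sub_const (g x)).sub hGx

end Dual

theorem propertyK_of_grothendieck_subspace_general (X : Type*) [NormedAddCommGroup X]
    [NormedSpace ℝ X] (Y : Submodule ℝ X)
    [IsClosed (Y : Set X)] (hY : GrothendieckSpace ↥Y)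
    (hQ : PropertyK (X ⧸ Y)) : PropertyK X := by
  intro f g hfg
  obtain ⟨f₁, hff₁, hf₁Y⟩ := exists_isConvexBlock_tendsto_comp_subtypeL Y hY hfg
  obtain ⟨G, E, hG, hE, hf₁⟩ :=
    exists_eq_add_comp_mkQL_of_wStarTendsto Y (hff₁.wStarTendsto hfg) hf₁Y
  obtain ⟨E', H, hEE', hE'H⟩ := hQ E 0 hE
  -- the weights of the block sequence `E'` of `E`, applied to the pairs `(G k, E k)`
  obtain ⟨w, hGEw, hwE'⟩ := hEE'.exists_of_map (LinearMap.snd ℝ _ _) (x := fun k => (G k, E k))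
  simp only [LinearMap.snd_apply] at hwE'
  let Φ := LinearMap.coprod LinearMap.id (ContinuousLinearMap.lcomp ℝ Y.mkQL)
  have hf₁Φ : f₁ = fun k => g + Φ (G k, E k) := funext fun k => by simp [Φ, hf₁]
  refine ⟨fun k => g + Φ (w k), g + H.comp Y.mkQL,
    hff₁.trans (hf₁Φ ▸ (hGEw.map Φ).const_add g), ?_⟩
  have hG' : Tendsto (fun k => g + (w k).1) atTop (𝓝 g) := by
    simpa using tendsto_const_nhds.add ((hGEw.map (LinearMap.fst ℝ _ _)).tendsto hG)
  simpa [Φ, hwE', add_assoc] using hG'.mackeyTendsto.add (hE'H.comp Y.mkQL)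

theorem propertyK_of_grothendieck_subspace (X : Type*) [NormedAddCommGroup X]
    [NormedSpace ℝ X] [CompleteSpace X] (Y : Submodule ℝ X)
    [IsClosed (Y : Set X)] (hY : GrothendieckSpace ↥Y)
    (hQ : PropertyK (X ⧸ Y)) : PropertyK X :=
  propertyK_of_grothendieck_subspace_general X Y hY hQ
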